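/- Let S be a monoid with the fem-property, i.e., every finitely generated S-act embeds into a monogenic S-act. Then every almost pure S-act is absolutely pure. -/

import Mathlib

universe u v w

/-- A right `S`-act: a set with an action `A × S → A` with `a·1 = a`, `a·(st) = (a·s)·t`. -/
class RAct (S : Type u) [Monoid S] (A : Type v) where
  act : A → S → A
  act_one : ∀ a : A, act a 1 = a
  act_mul : ∀ (a : A) (s t : S), act a (s * t) = act (act a s) t

infixl:70 " ⊳ " => RAct.act

/-- An `S`-morphism of right `S`-acts. -/
def IsRActHom (S : Type u) [Monoid S] {A : Type v} {B : Type w}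
    [RAct S A] [RAct S B] (f : A → B) : Prop :=
  ∀ (a : A) (s : S), f (a ⊳ s) = f a ⊳ s

/-- The free `S`-act `F_S(X) = X × S`, with `(x,s)·t = (x, st)`. -/
instance freeAct (S : Type u) [Monoid S] (X : Type w) : RAct S (X × S) where
  act p s := (p.1, p.2 * s)
  act_one p := by simp
  act_mul p s t := by simp [mul_assoc]

/-- Disjoint union of two `S`-acts. -/
instance sumAct (S : Type u) [Monoid S] {A : Type v} {B : Type w} [RAct S A] [RAct S B] :
    RAct S (A ⊕ B) where
  act x s := Sum.elim (fun a => Sum.inl (a ⊳ s)) (fun b => Sum.inr (b ⊳ s)) x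
  act_one := by rintro (a | b) <;> simp [RAct.act_one]
  act_mul := by rintro (a | b) s t <;> simp [RAct.act_mul]

/-- Congruence on a right `S`-act. -/
structure IsActCongr (S : Type u) [Monoid S] {A : Type v} [RAct S A]
    (r : A → A → Prop) : Prop where
  refl : ∀ a, r a a
  symm : ∀ {a b}, r a b → r b a
  trans : ∀ {a b c}, r a b → r b c → r a c
  act : ∀ {a b} (s : S), r a b → r (a ⊳ s) (b ⊳ s)

/-- The act congruence generated by a set of pairs `H`. -/
def congGen (S : Type u) [Monoid S] {A : Type v} [RAct S A]
    (H : Set (A × A)) (a b : A) : Prop :=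
  ∀ r : A → A → Prop, IsActCongr S r → (∀ p ∈ H, r p.1 p.2) → r a b

theorem isActCongr_congGen (S : Type u) [Monoid S] {A : Type v} [RAct S A]
    (H : Set (A × A)) : IsActCongr S (congGen S H) where
  refl a := fun _r hr _ => hr.refl a
  symm h := fun r hr hH => hr.symm (h r hr hH)
  trans h1 h2 := fun r hr hH => hr.trans (h1 r hr hH) (h2 r hr hH)
  act s h := fun r hr hH => hr.act s (h r hr hH)

/-- Equations over an `S`-act `A` with variables from `X`:
`xs = yt` (which includes `xs = xt`) or `xs = a`. -/
inductive Eqn (S : Type u) (A : Type v) (X : Type w) where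
  | vv : X → S → X → S → Eqn S A X
  | vc : X → S → A → Eqn S A X

/-- `b : X → C` is a solution of `E` in the act `C`, where `ι : A → C` interprets constants. -/
def IsSolution (S : Type u) [Monoid S] {A : Type v} {X : Type w} {C : Type*}
    [RAct S C] (ι : A → C) (E : Set (Eqn S A X)) (b : X → C) : Prop :=
  (∀ x s y t, Eqn.vv x s y t ∈ E → b x ⊳ s = b y ⊳ t) ∧
  (∀ x s a, Eqn.vc x s a ∈ E → b x ⊳ s = ι a)

/-- A set of equations over `A` is consistent if it has a solution in some act containing `A`. -/
def Consistent (S : Type u) [Monoid S] {A : Type v} {X : Type w} [RAct S A]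
    (E : Set (Eqn S A X)) : Prop :=
  ∃ (B : Type (max u v w)) (_ : RAct S B) (ι : A → B),
    Function.Injective ι ∧ IsRActHom S ι ∧ ∃ b : X → B, IsSolution S ι E b

/-- `A` is `n`-absolutely pure: every finite consistent system of equations over `A`
in at most `n` variables has a solution in `A`. -/
def NPure (S : Type u) [Monoid S] (A : Type v) [RAct S A] (n : ℕ) : Prop :=
  ∀ E : Set (Eqn S A (Fin n)), E.Finite → Consistent S E →
    ∃ c : Fin n → A, IsSolution S id E c

/-- Almost pure: 1-absolutely pure. -/
def AlmostPure (S : Type u) [Monoid S] (A : Type v) [RAct S A] : Prop :=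
  NPure S A 1

/-- Absolutely pure: `n`-absolutely pure for every `n`. -/
def AbsolutelyPure (S : Type u) [Monoid S] (A : Type v) [RAct S A] : Prop :=
  ∀ n : ℕ, NPure S A n

/-- The pairs `H(Σ)` in the free act coming from constant-free equations of `E`. -/
def Hcf (S : Type u) [Monoid S] {A : Type v} {X : Type w}
    (E : Set (Eqn S A X)) : Set ((X × S) × (X × S)) :=
  {p | ∃ x u y v, Eqn.vv x u y v ∈ E ∧ p = ((x, u), (y, v))}

/-- The pairs `H(Σ) ∪ K(Σ)` on the disjoint union `A ⊔ F_S(X)`. -/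
def HK (S : Type u) [Monoid S] {A : Type v} {X : Type w}
    (E : Set (Eqn S A X)) : Set ((A ⊕ X × S) × (A ⊕ X × S)) :=
  {p | (∃ x u y v, Eqn.vv x u y v ∈ E ∧ p = (Sum.inr (x, u), Sum.inr (y, v))) ∨
       (∃ x s a, Eqn.vc x s a ∈ E ∧ p = (Sum.inr (x, s), Sum.inl a))}

/-- Quotient of an act by a generated congruence. -/
instance quotAct (S : Type u) [Monoid S] {A : Type v} [RAct S A] (H : Set (A × A)) :
    RAct S (Quot (congGen S H)) where
  act q s := Quot.map (fun a => a ⊳ s) (fun _a _b h => (isActCongr_congGen S H).act s h) q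
  act_one := by
    rintro ⟨a⟩
    show Quot.mk _ (a ⊳ (1 : S)) = Quot.mk _ a
    rw [RAct.act_one]
  act_mul := by
    rintro ⟨a⟩ s t
    show Quot.mk _ (a ⊳ (s * t)) = Quot.mk _ (a ⊳ s ⊳ t)
    rw [RAct.act_mul]

/-- The canonical extension `A(Σ) = (A ⊔ F_S(X)) / κ_Σ`. -/
abbrev ActExt (S : Type u) [Monoid S] {A : Type v} {X : Type w} [RAct S A]
    (E : Set (Eqn S A X)) : Type (max u v w) :=
  Quot (congGen S (HK S E))

/-- The natural map `ν_Σ : A → A(Σ)`. -/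
def extOfBase (S : Type u) [Monoid S] {A : Type v} {X : Type w} [RAct S A]
    (E : Set (Eqn S A X)) (a : A) : ActExt S E :=
  Quot.mk _ (Sum.inl a)

/-- A finitely generated `S`-act. -/
def IsFG (S : Type u) [Monoid S] (A : Type v) [RAct S A] : Prop :=
  ∃ T : Finset A, ∀ a : A, ∃ t ∈ T, ∃ s : S, a = t ⊳ s

/-- A monogenic (cyclic) `S`-act. -/
def Monogenic (S : Type u) [Monoid S] (C : Type v) [RAct S C] : Prop :=
  ∃ c : C, ∀ y : C, ∃ s : S, y = c ⊳ s

/-- `A` embeds into `C` as an `S`-act. -/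
def ActEmbeds (S : Type u) [Monoid S] (A : Type v) (C : Type w) [RAct S A] [RAct S C] : Prop :=
  ∃ ι : A → C, IsRActHom S ι ∧ Function.Injective ι

/-- A finitely presented `S`-act: isomorphic to `F_S(X)/ρ` with `X` finite and
`ρ` a finitely generated congruence. -/
def IsFP (S : Type u) [Monoid S] (A : Type v) [RAct S A] : Prop :=
  ∃ (n : ℕ) (H : Set ((Fin n × S) × (Fin n × S))), H.Finite ∧
    ∃ φ : Fin n × S → A, IsRActHom S φ ∧ Function.Surjective φ ∧
      ∀ p q : Fin n × S, φ p = φ q ↔ congGen S H p q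

/-- A right coherent monoid. -/
def RightCoherent (S : Type u) [Monoid S] : Prop :=
  ∀ (A B : Type u) (_ : RAct S A) (_ : RAct S B) (ι : B → A),
    IsRActHom S ι → Function.Injective ι → IsFP S A → IsFG S B → IsFP S B

/-- The fem-property: every finitely generated `S`-act embeds into a monogenic act. -/
def FemProperty (S : Type u) [Monoid S] : Prop :=
  ∀ (A : Type u) (_ : RAct S A), IsFG S A → ∃ (C : Type u) (_ : RAct S C),
    Monogenic S C ∧ ActEmbeds S A C

/-- A subact of an `S`-act. -/
structure Subact (S : Type u) [Monoid S] (B : Type v) [RAct S B] where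
  carrier : Set B
  closed : ∀ b ∈ carrier, ∀ s : S, b ⊳ s ∈ carrier

instance subAct (S : Type u) [Monoid S] {B : Type v} [RAct S B] (T : Subact S B) :
    RAct S T.carrier where
  act a s := ⟨a.1 ⊳ s, T.closed a.1 a.2 s⟩
  act_one a := Subtype.ext (RAct.act_one a.1)
  act_mul a s t := Subtype.ext (RAct.act_mul a.1 s t)


def BuiltFrom (S : Type u) [Monoid S] {A B : Type v} [RAct S A] [RAct S B]
    (ι : A → B) (P : ℕ → Prop) : Prop :=
  IsRActHom S ι ∧ Function.Injective ι ∧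
  ∃ (ξ : Ordinal.{v}) (C : Ordinal.{v} → Subact S B),
    (C 0).carrier = Set.range ι ∧
    (∀ i j : Ordinal.{v}, i ≤ j → (C i).carrier ⊆ (C j).carrier) ∧
    (C ξ).carrier = Set.univ ∧
    (∀ ζ : Ordinal.{v}, ζ ≤ ξ → Order.IsSuccLimit ζ → (C ζ).carrier = ⋃ i ∈ Set.Iio ζ, (C i).carrier) ∧
    (∀ i : Ordinal.{v}, i < ξ → ∃ m : ℕ, P m ∧
      (∃ E : Set (Eqn S (↥(C i).carrier) (Fin m)), Consistent S E ∧
        (∃ e : ActExt S E → B, IsRActHom S e ∧ Function.Injective e ∧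
          Set.range e = (C (i + 1)).carrier ∧
          (∀ d : ↥(C i).carrier, e (extOfBase S E d) = d.1))))


theorem congGen_of_quot_eq (S : Type u) [Monoid S] {A : Type v} [RAct S A]
    (H : Set (A × A)) {a b : A}
    (h : Quot.mk (congGen S H) a = Quot.mk (congGen S H) b) : congGen S H a b := by
  have hcong := isActCongr_congGen S H
  have hequiv : Equivalence (congGen S H) :=
    ⟨hcong.refl, fun h => hcong.symm h, fun h1 h2 => hcong.trans h1 h2⟩
  exact (hequiv.eqvGen_iff).mp (Quot.eq.mp h)

/-- Translation of an `n`-variable equation into a one-variable equation. -/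
def eqnMap {S : Type u} [Monoid S] {A : Type v} {n : ℕ} (σ : Fin n → S) :
    Eqn S A (Fin n) → Eqn S A (Fin 1)
  | .vv x u y v => .vv 0 (σ x * u) 0 (σ y * v)
  | .vc x s a => .vc 0 (σ x * s) a

/-- Over a monoid with the fem-property, every almost pure act is absolutely pure. -/
theorem fem_almostPure_absolutelyPure (S : Type u) [Monoid S]
    (hS : FemProperty S) (A : Type u) [RAct S A]
    (hA : AlmostPure S A) : AbsolutelyPure S A := by
  classical
  intro n E hEfin hEcons
  obtain ⟨B, _instB, ι, hιinj, hιhom, b, hbvv, hbvc⟩ := hEcons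
  -- generating set of the subact of B generated by the solution and the constants
  set gmap : Eqn S A (Fin n) → B := fun e => match e with
    | .vv x _ _ _ => b x
    | .vc _ _ a => ι a with hgmap
  set G : Set B := Set.range b ∪ gmap '' E with hG
  have hGfin : G.Finite := (Set.finite_range b).union (hEfin.image _)
  set T : Subact S B :=
    ⟨{z | ∃ g ∈ G, ∃ s : S, z = g ⊳ s}, by
      rintro z ⟨g, hg, s, rfl⟩ t
      exact ⟨g, hg, s * t, (RAct.act_mul g s t).symm⟩⟩ with hT
  letI : RAct S T.carrier := subAct S T
  have hbT : ∀ x : Fin n, b x ∈ T.carrier := fun x =>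
    ⟨b x, Or.inl ⟨x, rfl⟩, 1, (RAct.act_one (b x)).symm⟩
  -- T is finitely generated
  have hTfg : IsFG S T.carrier := by
    refine ⟨(hGfin.preimage (Subtype.val_injective.injOn)).toFinset, ?_⟩
    rintro ⟨z, g, hg, s, rfl⟩
    refine ⟨⟨g, g, hg, 1, (RAct.act_one g).symm⟩, ?_, s, rfl⟩
    simp only [Set.Finite.mem_toFinset, Set.mem_preimage]
    exact hg
  -- embed T into a monogenic act C = cS
  obtain ⟨C, _instC, ⟨c, hc⟩, jj, hjhom, hjinj⟩ := hS T.carrier this hTfg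
  set β : Fin n → T.carrier := fun x => ⟨b x, hbT x⟩ with hβ
  set σ : Fin n → S := fun x => Classical.choose (hc (jj (β x))) with hσdef
  have hσ : ∀ x, jj (β x) = c ⊳ σ x := fun x => Classical.choose_spec (hc (jj (β x)))
  -- the subact of A generated by the constants of E
  set A₀ : Set A := {z | ∃ a, (∃ x s, Eqn.vc x s a ∈ E) ∧ ∃ s : S, z = a ⊳ s} with hA₀
  have hA₀act : ∀ a ∈ A₀, ∀ s : S, a ⊳ s ∈ A₀ := by
    rintro z ⟨a, ha, s, rfl⟩ t
    exact ⟨a, ha, s * t, (RAct.act_mul a s t).symm⟩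
  have hconst : ∀ {x s a}, Eqn.vc x s a ∈ E → a ∈ A₀ := fun {x s a} h =>
    ⟨a, ⟨x, s, h⟩, 1, (RAct.act_one a).symm⟩
  have hA₀T : ∀ a ∈ A₀, ι a ∈ T.carrier := by
    rintro z ⟨a, ⟨x, s, he⟩, t, rfl⟩
    exact ⟨ι a, Or.inr ⟨Eqn.vc x s a, he, rfl⟩, t, hιhom a t⟩
  set F : A → C := fun a => if h : a ∈ A₀ then jj ⟨ι a, hA₀T a h⟩ else c with hFdef
  have hF : ∀ a (h : a ∈ A₀), F a = jj ⟨ι a, hA₀T a h⟩ := fun a h => dif_pos h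
  have hFact : ∀ a (h : a ∈ A₀) (s : S), F a ⊳ s = F (a ⊳ s) := by
    intro a h s
    rw [hF a h, hF (a ⊳ s) (hA₀act a h s), ← hjhom]
    exact congrArg jj (Subtype.ext (hιhom a s).symm)
  have hFinj : ∀ a (_ : a ∈ A₀) a' (_ : a' ∈ A₀), F a = F a' → a = a' := by
    intro a h a' h' he
    rw [hF a h, hF a' h'] at he
    exact hιinj (congrArg Subtype.val (hjinj he))
  -- the amalgam D = (A ⊔ C)/κ
  set H : Set ((A ⊕ C) × (A ⊕ C)) :=
    {p | ∃ a ∈ A₀, p = (Sum.inl a, Sum.inr (F a))} with hH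
  set R : (A ⊕ C) → (A ⊕ C) → Prop := fun x y => x = y ∨
    ∃ a ∈ A₀, (x = Sum.inl a ∧ y = Sum.inr (F a)) ∨ (y = Sum.inl a ∧ x = Sum.inr (F a))
    with hRdef
  have hR : IsActCongr S R := by
    constructor
    · intro a; exact Or.inl rfl
    · rintro x y (rfl | ⟨a, ha, ⟨rfl, rfl⟩ | ⟨rfl, rfl⟩⟩)
      · exact Or.inl rfl
      · exact Or.inr ⟨a, ha, Or.inr ⟨rfl, rfl⟩⟩
      · exact Or.inr ⟨a, ha, Or.inl ⟨rfl, rfl⟩⟩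
    · rintro x y z hxy hyz
      rcases hxy with rfl | ⟨a, ha, ⟨rfl, rfl⟩ | ⟨rfl, rfl⟩⟩
      · exact hyz
      · -- x = inl a, y = inr (F a)
        rcases hyz with rfl | ⟨a', ha', ⟨h1, h2⟩ | ⟨h1, h2⟩⟩
        · exact Or.inr ⟨a, ha, Or.inl ⟨rfl, rfl⟩⟩
        · exact absurd h1 (by simp)
        · have haa : a = a' := hFinj a ha a' ha' (Sum.inr.inj h2)
          exact Or.inl (by rw [h1, ← haa])
      · -- y = inl a, x = inr (F a)
        rcases hyz with rfl | ⟨a', ha', ⟨h1, h2⟩ | ⟨h1, h2⟩⟩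
        · exact Or.inr ⟨a, ha, Or.inr ⟨rfl, rfl⟩⟩
        · have haa : a = a' := Sum.inl.inj h1
          exact Or.inl (by rw [h2, ← haa])
        · exact absurd h2 (by simp)
    · rintro x y s (rfl | ⟨a, ha, ⟨rfl, rfl⟩ | ⟨rfl, rfl⟩⟩)
      · exact Or.inl rfl
      · exact Or.inr ⟨a ⊳ s, hA₀act a ha s, Or.inl ⟨rfl, by
          show Sum.inr (F a ⊳ s) = _
          rw [hFact a ha s]⟩⟩
      · exact Or.inr ⟨a ⊳ s, hA₀act a ha s, Or.inr ⟨rfl, by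
          show Sum.inr (F a ⊳ s) = _
          rw [hFact a ha s]⟩⟩
  have hRH : ∀ p ∈ H, R p.1 p.2 := by
    rintro p ⟨a, ha, rfl⟩
    exact Or.inr ⟨a, ha, Or.inl ⟨rfl, rfl⟩⟩
  -- key computation
  have hkey : ∀ (x : Fin n) (u : S) (h : b x ⊳ u ∈ T.carrier),
      c ⊳ (σ x * u) = jj ⟨b x ⊳ u, h⟩ := by
    intro x u h
    rw [RAct.act_mul, ← hσ x, ← hjhom]
    rfl
  -- the one-variable system
  set E' : Set (Eqn S A (Fin 1)) := eqnMap σ '' E with hE'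
  have hE'fin : E'.Finite := hEfin.image (eqnMap σ)
  have hE'cons : Consistent S E' := by
    refine ⟨Quot (congGen S H), inferInstance, fun a => Quot.mk _ (Sum.inl a),
      ?_, fun a s => rfl, fun _ => Quot.mk _ (Sum.inr c), ?_, ?_⟩
    · -- injectivity
      intro a a' h
      have hcg := congGen_of_quot_eq S H h
      rcases hcg R hR hRH with he | ⟨a₀, _, ⟨h1, h2⟩ | ⟨h1, h2⟩⟩
      · exact Sum.inl.inj he
      · exact absurd h2 (by simp)
      · exact absurd h2 (by simp)
    · -- vv equations
      rintro x' s' y' t' ⟨e₀, he₀, hme⟩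
      cases e₀ with
      | vv x u y v =>
        simp only [eqnMap] at hme
        obtain ⟨hx', hs', hy', ht'⟩ := Eqn.vv.inj hme
        subst hs'; subst ht'
        have hmem : b x ⊳ u ∈ T.carrier := ⟨b x, Or.inl ⟨x, rfl⟩, u, rfl⟩
        have hmem' : b y ⊳ v ∈ T.carrier := ⟨b y, Or.inl ⟨y, rfl⟩, v, rfl⟩
        show Quot.mk _ (Sum.inr (c ⊳ (σ x * u))) = Quot.mk _ (Sum.inr (c ⊳ (σ y * v)))
        rw [hkey x u hmem, hkey y v hmem']
        exact congrArg _ (congrArg _ (congrArg jj (Subtype.ext (hbvv x u y v he₀))))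
      | vc x s a =>
        simp only [eqnMap] at hme
        exact absurd hme (by simp)
    · -- vc equations
      rintro x' s' a ⟨e₀, he₀, hme⟩
      cases e₀ with
      | vv x u y v =>
        simp only [eqnMap] at hme
        exact absurd hme (by simp)
      | vc x s a₀ =>
        simp only [eqnMap] at hme
        obtain ⟨hx', hs', ha'⟩ := Eqn.vc.inj hme
        subst hs'; subst ha'
        have hmem : b x ⊳ s ∈ T.carrier := ⟨b x, Or.inl ⟨x, rfl⟩, s, rfl⟩
        have ha₀ : a₀ ∈ A₀ := hconst he₀
        show Quot.mk _ (Sum.inr (c ⊳ (σ x * s))) = Quot.mk _ (Sum.inl a₀)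
        rw [hkey x s hmem]
        have hjF : jj ⟨b x ⊳ s, hmem⟩ = F a₀ := by
          rw [hF a₀ ha₀]
          exact congrArg jj (Subtype.ext (hbvc x s a₀ he₀))
        rw [hjF]
        exact Quot.sound (fun r hr hH' => hr.symm (hH' _ ⟨a₀, ha₀, rfl⟩))
  -- apply almost purity
  obtain ⟨c', hc'vv, hc'vc⟩ := hA E' hE'fin hE'cons
  refine ⟨fun x => c' 0 ⊳ σ x, ?_, ?_⟩
  · intro x u y v he
    have hsol := hc'vv 0 (σ x * u) 0 (σ y * v) ⟨Eqn.vv x u y v, he, rfl⟩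
    rw [← RAct.act_mul, ← RAct.act_mul]
    exact hsol
  · intro x s a he
    have hsol := hc'vc 0 (σ x * s) a ⟨Eqn.vc x s a, he, rfl⟩
    rw [← RAct.act_mul]
    exact hsol
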